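/- arXiv:1704.01156 — 8 statements merged into one kernel-verified Lean document; each statement's English description precedes it below -/
import Mathlib

section
/- Let t = f(n,p,q) be the minimum number of colors in a (p,q)-coloring of K_n. Then f(⌈(n-1)/t⌉, p-1, q-1) ≤ t. That is, if K_n admits an edge-coloring with t colors in which every p-clique spans at least q colors, then the complete graph on ⌈(n-1)/t⌉ vertices admits an edge-coloring with at most t colors in which every (p-1)-clique spans at least q-1 colors. -/
/-- If `K_n` admits an edge-coloring with `t` colors in which every `p`-clique spans at
least `q` colors, then `K_{⌈(n-1)/t⌉}` admits an edge-coloring with at most `t` colors in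
which every `(p-1)`-clique spans at least `q-1` colors. -/
theorem stmt_0 (n p q t : ℕ) (hn : 0 < n) (ht : 0 < t)
    (h : ∃ c : Fin n → Fin n → Fin t,
      (∀ x y, c x y = c y x) ∧
      ∀ S : Finset (Fin n), S.card = p →
        q ≤ (((S ×ˢ S).filter fun e => e.1 ≠ e.2).image fun e => c e.1 e.2).card) :
    ∃ c' : Fin ((n - 1 + t - 1) / t) → Fin ((n - 1 + t - 1) / t) → Fin t,
      (∀ x y, c' x y = c' y x) ∧
      ∀ S : Finset (Fin ((n - 1 + t - 1) / t)), S.card = p - 1 →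
        q - 1 ≤ (((S ×ˢ S).filter fun e => e.1 ≠ e.2).image fun e => c' e.1 e.2).card := by
  obtain ⟨c, hsym, hcol⟩ := h
  set m := (n - 1 + t - 1) / t with hm
  by_cases hp : p ≤ 1
  · -- degenerate: p ≤ 1 forces q = 0
    have hq : q = 0 := by
      rcases Nat.lt_or_ge p 1 with h0 | h1
      · have hp0 : p = 0 := by omega
        have := hcol ∅ (by simp [hp0])
        simpa using this
      · have hp1 : p = 1 := le_antisymm hp h1
        have := hcol {⟨0, hn⟩} (by simp [hp1])
        simpa [Finset.filter_singleton] using this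
    exact ⟨fun _ _ => ⟨0, ht⟩, fun _ _ => rfl, fun S hS => by simp [hq]⟩
  · push_neg at hp
    by_cases hm0 : m = 0
    · refine ⟨fun _ _ => ⟨0, ht⟩, fun _ _ => rfl, fun S hS => ?_⟩
      exfalso
      have h1 : S.card ≤ Finset.univ.card := Finset.card_le_univ S
      rw [Finset.card_univ, Fintype.card_fin] at h1
      omega
    · have hn2 : 2 ≤ n := by
        by_contra hcon
        apply hm0
        have hn1 : n = 1 := by omega
        rw [hm, hn1]
        exact Nat.div_eq_of_lt (by omega)
      have hmeq : m = (n - 2) / t + 1 := by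
        rw [hm, show n - 1 + t - 1 = (n - 2) + t by omega, Nat.add_div_right _ ht]
      set x : Fin n := ⟨0, hn⟩ with hx
      have hpig : ∃ a : Fin t,
          m ≤ ((Finset.univ.erase x).filter fun y => c x y = a).card := by
        have hcard : (Finset.univ : Finset (Fin t)).card * (m - 1)
            < ((Finset.univ : Finset (Fin n)).erase x).card := by
          rw [Finset.card_univ, Fintype.card_fin,
            Finset.card_erase_of_mem (Finset.mem_univ _), Finset.card_univ, Fintype.card_fin]
          have h1 : t * (m - 1) ≤ n - 2 := by
            rw [hmeq]
            simpa using Nat.mul_div_le (n - 2) t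
          omega
        obtain ⟨a, -, ha⟩ := Finset.exists_lt_card_fiber_of_mul_lt_card_of_maps_to
          (fun y _ => Finset.mem_univ (c x y)) hcard
        exact ⟨a, by omega⟩
      obtain ⟨a, ha⟩ := hpig
      obtain ⟨T, hTsub, hT⟩ := Finset.exists_subset_card_eq ha
      have e : (T : Type) ≃ Fin m := T.equivFin.trans (finCongr hT)
      set g : Fin m → Fin n := fun i => (e.symm i : Fin n) with hg
      have hginj : Function.Injective g := by
        intro i j hij
        have : (e.symm i : { x // x ∈ T }) = e.symm j := Subtype.ext hij
        simpa using congrArg e this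
      have hgmem : ∀ i, g i ∈ (Finset.univ.erase x).filter fun y => c x y = a := by
        intro i
        exact hTsub (e.symm i).2
      have hgne : ∀ i, g i ≠ x := by
        intro i
        have := hgmem i
        simp only [Finset.mem_filter, Finset.mem_erase] at this
        exact this.1.1
      have hga : ∀ i, c x (g i) = a := by
        intro i
        have := hgmem i
        simp only [Finset.mem_filter] at this
        exact this.2
      refine ⟨fun i j => c (g i) (g j), fun i j => hsym _ _, fun S hS => ?_⟩
      set S' : Finset (Fin n) := S.image g with hS'
      have hxS' : x ∉ S' := by
        simp only [hS', Finset.mem_image]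
        rintro ⟨i, -, hi⟩
        exact hgne i hi
      have hS'card : S'.card = p - 1 := by
        rw [hS', Finset.card_image_of_injective _ hginj, hS]
      have hbig := hcol (insert x S') (by
        rw [Finset.card_insert_of_notMem hxS', hS'card]; omega)
      set A := ((S ×ˢ S).filter fun e => e.1 ≠ e.2).image fun e => c (g e.1) (g e.2) with hA
      have hsub : (((insert x S' ×ˢ insert x S').filter fun e => e.1 ≠ e.2).image
          fun e => c e.1 e.2) ⊆ insert a A := by
        intro b hb
        simp only [Finset.mem_image, Finset.mem_filter, Finset.mem_product] at hb
        obtain ⟨⟨u, v⟩, ⟨⟨hu, hv⟩, huv⟩, hcb⟩ := hb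
        simp only [Finset.mem_insert] at hu hv
        rcases hu with hu | hu
        · -- u = x, so v ∈ S'
          rcases hv with hv | hv
          · exact absurd (hu.trans hv.symm) huv
          · obtain ⟨j, -, hj⟩ := Finset.mem_image.mp (hS' ▸ hv)
            have : b = a := by rw [← hcb, hu, ← hj, hga]
            simp [this]
        · rcases hv with hv | hv
          · obtain ⟨i, -, hi⟩ := Finset.mem_image.mp (hS' ▸ hu)
            have : b = a := by rw [← hcb, hv, hsym, ← hi, hga]
            simp [this]
          · obtain ⟨i, hiS, hi⟩ := Finset.mem_image.mp (hS' ▸ hu)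
            obtain ⟨j, hjS, hj⟩ := Finset.mem_image.mp (hS' ▸ hv)
            refine Finset.mem_insert_of_mem ?_
            rw [hA]
            refine Finset.mem_image.mpr ⟨(i, j), ?_, by rw [hi, hj, hcb]⟩
            simp only [Finset.mem_filter, Finset.mem_product]
            refine ⟨⟨hiS, hjS⟩, ?_⟩
            rintro rfl
            exact huv (hi ▸ hj ▸ rfl)
      have hle : q ≤ A.card + 1 := by
        calc q ≤ _ := hbig
        _ ≤ (insert a A).card := Finset.card_le_card hsub
        _ ≤ A.card + 1 := Finset.card_insert_le _ _
      omega
end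

section
/- In the CFLS coloring φ₁, there do not exist four distinct vertices a, b, c, d with φ₁(a,b) = φ₁(c,d) and φ₁(a,c) = φ₁(a,d). -/
/-- The first index at which two tuples differ, if any. -/
def firstDiff {β : ℕ} {α : Type*} [DecidableEq α] (u v : Fin β → α) : Option (Fin β) :=
  if h : (Finset.univ.filter fun k => u k ≠ v k).Nonempty then
    some ((Finset.univ.filter fun k => u k ≠ v k).min' h)
  else none

/-- The CFLS coloring: a vertex is an element of `{0,1}^{β²}`, viewed as `β` blocks of
length `β` (so `x i : Fin β → Bool` is the `i`-th block).  The color of the edge `xy` is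
`((i, {x⁽ⁱ⁾, y⁽ⁱ⁾}), i₁, …, i_β)` where `i` is the first block at which `x, y` differ
(`none` if they agree everywhere) and `i_k` is the first bit at which blocks `x⁽ᵏ⁾, y⁽ᵏ⁾`
differ (`none` if they agree). -/
def phi1 {β : ℕ} (x y : Fin β → Fin β → Bool) :
    Option (Fin β × Finset (Fin β → Bool)) × (Fin β → Option (Fin β)) :=
  ((firstDiff x y).map fun i => (i, ({x i, y i} : Finset (Fin β → Bool))),
   fun k => firstDiff (x k) (y k))

lemma firstDiff_none_iff {β : ℕ} {α : Type*} [DecidableEq α] (u v : Fin β → α) :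
    firstDiff u v = none ↔ u = v := by
  unfold firstDiff
  split_ifs with h
  · simp only [reduceCtorEq, false_iff]
    intro huv
    obtain ⟨k, hk⟩ := h
    rw [Finset.mem_filter] at hk
    exact hk.2 (congrFun huv k)
  · simp only [true_iff]
    funext k
    by_contra hk
    exact h ⟨k, Finset.mem_filter.mpr ⟨Finset.mem_univ k, hk⟩⟩

lemma firstDiff_spec {β : ℕ} {α : Type*} [DecidableEq α] {u v : Fin β → α} {i : Fin β}
    (h : firstDiff u v = some i) : u i ≠ v i ∧ ∀ k, k < i → u k = v k := by
  unfold firstDiff at h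
  split_ifs at h with hne
  injection h with h
  subst h
  refine ⟨?_, ?_⟩
  · have := Finset.min'_mem _ hne
    rw [Finset.mem_filter] at this
    exact this.2
  · intro k hk
    by_contra hku
    exact absurd (Finset.min'_le _ k (Finset.mem_filter.mpr ⟨Finset.mem_univ k, hku⟩))
      (not_le.mpr hk)

/-- The CFLS coloring forbids four distinct vertices `a,b,c,d` with
`φ₁(a,b) = φ₁(c,d)` and `φ₁(a,c) = φ₁(a,d)`. -/
theorem stmt_2 {β : ℕ} (a b c d : Fin β → Fin β → Bool)
    (hdist : Function.Injective ![a, b, c, d])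
    (h1 : phi1 a b = phi1 c d) (h2 : phi1 a c = phi1 a d) : False := by
  have hab : a ≠ b := fun h => by
    have := hdist (a₁ := 0) (a₂ := 1) (by simpa using h)
    simp at this
  have hac : a ≠ c := fun h => by
    have := hdist (a₁ := 0) (a₂ := 2) (by simpa using h)
    simp at this
  have had : a ≠ d := fun h => by
    have := hdist (a₁ := 0) (a₂ := 3) (by simpa using h)
    simp at this
  have e1 := congrArg Prod.fst h1
  have e2 := fun k => congrFun (congrArg Prod.snd h2) k
  have f1 := congrArg Prod.fst h2
  simp only [phi1] at e1 e2 f1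
  -- first differing block of (a,c) and (a,d)
  rcases hF : firstDiff a c with _ | i
  · exact hac ((firstDiff_none_iff a c).mp hF)
  rcases hG : firstDiff a d with _ | i'
  · exact had ((firstDiff_none_iff a d).mp hG)
  rw [hF, hG] at f1
  simp only [Option.map_some, Option.some.injEq, Prod.mk.injEq] at f1
  obtain ⟨rfl, hsetI⟩ := f1
  obtain ⟨hACi, hACbelow⟩ := firstDiff_spec hF
  obtain ⟨hADi, hADbelow⟩ := firstDiff_spec hG
  -- {a i, c i} = {a i, d i} forces c i = d i
  have hcd_i : c i = d i := by
    have : c i ∈ ({a i, d i} : Finset (Fin β → Bool)) := by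
      rw [← hsetI]; simp
    rcases Finset.mem_insert.mp this with h | h
    · exact absurd h.symm hACi
    · simpa using h
  -- first differing block of (a,b) and (c,d)
  rcases hH : firstDiff a b with _ | j
  · exact hab ((firstDiff_none_iff a b).mp hH)
  rcases hK : firstDiff c d with _ | j'
  · rw [hH, hK] at e1; simp at e1
  rw [hH, hK] at e1
  simp only [Option.map_some, Option.some.injEq, Prod.mk.injEq] at e1
  obtain ⟨rfl, hsetJ⟩ := e1
  obtain ⟨hABj, hABbelow⟩ := firstDiff_spec hH
  obtain ⟨hCDj, hCDbelow⟩ := firstDiff_spec hK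
  have hij : i ≠ j := fun h => hCDj (h ▸ hcd_i)
  rcases lt_or_gt_of_ne hij with hlt | hgt
  · -- i < j : bit-level argument at block j
    have hcj : c j ∈ ({a j, b j} : Finset (Fin β → Bool)) := by rw [hsetJ]; simp
    have hdj : d j ∈ ({a j, b j} : Finset (Fin β → Bool)) := by rw [hsetJ]; simp
    have e2j := e2 j
    rcases Finset.mem_insert.mp hcj with h | h'
    · -- c j = a j, so firstDiff (a j) (c j) = none, hence a j = d j
      have : firstDiff (a j) (c j) = none := (firstDiff_none_iff _ _).mpr h.symm
      rw [this] at e2j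
      have : a j = d j := (firstDiff_none_iff _ _).mp e2j.symm
      exact hCDj (h.trans this)
    · -- c j = b j, so d j = a j (since d j ≠ c j), hence a j = c j
      have h : c j = b j := Finset.mem_singleton.mp h'
      have hdja : d j = a j := by
        rcases Finset.mem_insert.mp hdj with h' | h'
        · exact h'
        · exact absurd ((Finset.mem_singleton.mp h').trans h.symm).symm hCDj
      have : firstDiff (a j) (d j) = none := (firstDiff_none_iff _ _).mpr hdja.symm
      rw [this] at e2j
      have : a j = c j := (firstDiff_none_iff _ _).mp e2j
      exact hCDj (this.symm.trans hdja.symm)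
  · -- j < i : a agrees with c and d below i, contradicting c j ≠ d j
    exact hCDj ((hACbelow j hgt).symm.trans (hADbelow j hgt))
end

section
/- Each color class of the CFLS coloring φ₁ is bipartite: there is no monochromatic odd cycle. More specifically, if v₁, ..., v_k are vertices with φ₁(v_j, v_{j+1}) equal to a fixed color α for all j (indices mod k) and k is odd, a contradiction follows. -/
lemma firstDiff_ne {β : ℕ} {α : Type*} [DecidableEq α] {u v : Fin β → α} {i : Fin β}
    (h : firstDiff u v = some i) : u i ≠ v i := by
  unfold firstDiff at h
  split at h
  · next hne =>
    simp only [Option.some.injEq] at h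
    have := Finset.min'_mem _ hne
    rw [h] at this
    simpa using this
  · simp at h

lemma firstDiff_isSome {β : ℕ} {α : Type*} [DecidableEq α] {u v : Fin β → α}
    (h : u ≠ v) : ∃ i, firstDiff u v = some i := by
  unfold firstDiff
  have hn : (Finset.univ.filter fun k => u k ≠ v k).Nonempty := by
    by_contra hc
    apply h; funext j
    by_contra hj
    exact hc ⟨j, by simp [hj]⟩
  rw [dif_pos hn]
  exact ⟨_, rfl⟩

/-- Color classes of the CFLS coloring are bipartite: there is no closed odd walk all of
whose edges have the same color `α`. -/
theorem stmt_3 {β k : ℕ} (hk : 3 ≤ k) (hodd : Odd k)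
    (v : ZMod k → Fin β → Fin β → Bool)
    (α : Option (Fin β × Finset (Fin β → Bool)) × (Fin β → Option (Fin β)))
    (hne : ∀ j : ZMod k, v j ≠ v (j + 1))
    (hcol : ∀ j : ZMod k, phi1 (v j) (v (j + 1)) = α) : False := by
  have key : ∀ j : ZMod k, ∃ i, firstDiff (v j) (v (j+1)) = some i ∧
      some (i, ({v j i, v (j+1) i} : Finset (Fin β → Bool))) = α.1 := by
    intro j
    obtain ⟨i, hi⟩ := firstDiff_isSome (hne j)
    refine ⟨i, hi, ?_⟩
    rw [← hcol j]
    simp [phi1, hi]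
  obtain ⟨i, hi0, hs0⟩ := key 0
  set x := v 0 i with hx
  set y := v (0+1) i with hy
  have hxy : x ≠ y := firstDiff_ne hi0
  have step : ∀ j : ZMod k, v j i ≠ v (j+1) i ∧
      ({v j i, v (j+1) i} : Finset (Fin β → Bool)) = {x, y} := by
    intro j
    obtain ⟨i', hi', hs'⟩ := key j
    have heq : (i', ({v j i', v (j+1) i'} : Finset (Fin β → Bool))) =
        (i, ({x, y} : Finset (Fin β → Bool))) := by
      have := hs'.trans hs0.symm
      exact Option.some.inj this
    have hii : i' = i := congrArg Prod.fst heq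
    subst hii
    exact ⟨firstDiff_ne hi', congrArg Prod.snd heq⟩
  have ind : ∀ n : ℕ, v (n : ZMod k) i = if Even n then x else y := by
    intro n
    induction n with
    | zero => simpa using hx
    | succ n ih =>
      obtain ⟨hne', hset⟩ := step (n : ZMod k)
      have hmem : v ((n : ZMod k) + 1) i ∈ ({x, y} : Finset (Fin β → Bool)) := by
        rw [← hset]; simp
      have hcast : ((n+1 : ℕ) : ZMod k) = (n : ZMod k) + 1 := by push_cast; ring
      rw [hcast]
      rcases Finset.mem_insert.mp hmem with h | h
      · -- v (n+1) i = x, so v n i ≠ x hence v n i = y hence ¬ Even n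
        rw [ih] at hne'
        by_cases hev : Even n
        · rw [if_pos hev] at hne'; exact absurd h.symm hne'
        · rw [if_neg hev] at hne'
          have : Even (n+1) := Nat.even_add_one.mpr hev
          rw [if_pos this]; exact h
      · have h' := Finset.mem_singleton.mp h
        rw [ih] at hne'
        by_cases hev : Even n
        · have : ¬ Even (n+1) := by simp [Nat.even_add_one, hev]
          rw [if_neg this]; exact h'
        · rw [if_neg hev] at hne'; exact absurd h'.symm hne'
  have h1 := ind k
  rw [ZMod.natCast_self] at h1
  rw [if_neg (Nat.not_even_iff_odd.mpr hodd)] at h1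
  exact hxy (hx.trans h1)
end

section
/- Under the CFLS coloring with the natural linear order on binary strings (binary value order), if a < b < c then φ₁(a,b) ≠ φ₁(b,c). -/
/-- Order on binary strings (as binary integers): `u < v` iff at the first differing bit,
`u` has `0` and `v` has `1`. -/
def blockLt {β : ℕ} (u v : Fin β → Bool) : Prop :=
  ∃ j : Fin β, u j = false ∧ v j = true ∧ ∀ k, k < j → u k = v k

/-- Order on vertices (binary strings of length β², as binary integers), via blocks:
`x < y` iff at the first differing block `i`, `x⁽ⁱ⁾ < y⁽ⁱ⁾`. -/
def strLt {β : ℕ} (x y : Fin β → Fin β → Bool) : Prop :=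
  ∃ i : Fin β, blockLt (x i) (y i) ∧ ∀ k, k < i → x k = y k

instance {β : ℕ} (u v : Fin β → Bool) : Decidable (blockLt u v) := by
  unfold blockLt; infer_instance

instance {β : ℕ} (x y : Fin β → Fin β → Bool) : Decidable (strLt x y) := by
  unfold strLt; infer_instance

lemma firstDiff_eq_some {β : ℕ} {α : Type*} [DecidableEq α] {u v : Fin β → α} {i : Fin β}
    (h : u i ≠ v i) (h2 : ∀ k, k < i → u k = v k) : firstDiff u v = some i := by
  have hi : i ∈ Finset.univ.filter fun k => u k ≠ v k := by simp [h]
  have hne : (Finset.univ.filter fun k => u k ≠ v k).Nonempty := ⟨i, hi⟩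
  unfold firstDiff
  rw [dif_pos hne]
  congr 1
  refine le_antisymm (Finset.min'_le _ _ hi) ?_
  refine Finset.le_min' _ _ _ fun k hk => ?_
  by_contra hlt
  push_neg at hlt
  exact (Finset.mem_filter.mp hk).2 (h2 k hlt)

lemma blockLt_ne {β : ℕ} {u v : Fin β → Bool} (h : blockLt u v) : u ≠ v := by
  obtain ⟨j, h0, h1, _⟩ := h
  intro he; rw [he, h1] at h0; exact Bool.noConfusion h0

lemma blockLt_asymm {β : ℕ} {u v : Fin β → Bool} (h : blockLt u v) (h' : blockLt v u) :
    False := by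
  obtain ⟨j, h0, h1, hlo⟩ := h
  obtain ⟨j', h0', h1', hlo'⟩ := h'
  rcases lt_trichotomy j j' with hjj | hjj | hjj
  · have := hlo' j hjj; rw [h0, h1] at this; exact Bool.noConfusion this
  · subst hjj; rw [h1'] at h0; exact Bool.noConfusion h0
  · have := hlo j' hjj; rw [h0', h1'] at this; exact Bool.noConfusion this

/-- With the natural linear order on binary strings, if `a < b < c` then
`φ₁(a,b) ≠ φ₁(b,c)`. -/
theorem stmt_6 {β : ℕ} (a b c : Fin β → Fin β → Bool)
    (hab : strLt a b) (hbc : strLt b c) : phi1 a b ≠ phi1 b c := by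
  obtain ⟨i, hbi, hki⟩ := hab
  obtain ⟨i', hbi', hki'⟩ := hbc
  have fab : firstDiff a b = some i :=
    firstDiff_eq_some (blockLt_ne hbi) hki
  have fbc : firstDiff b c = some i' :=
    firstDiff_eq_some (blockLt_ne hbi') hki'
  intro he
  have h1 := congrArg Prod.fst he
  simp only [phi1, fab, fbc, Option.map_some, Option.some.injEq, Prod.mk.injEq] at h1
  obtain ⟨hii, hset⟩ := h1
  subst hii
  have hac : a i = c i := by
    have hai : a i ∈ ({b i, c i} : Finset (Fin β → Bool)) := by
      rw [← hset]; simp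
    simp only [Finset.mem_insert, Finset.mem_singleton] at hai
    rcases hai with h | h
    · exact absurd h (blockLt_ne hbi)
    · exact h
  rw [← hac] at hbi'
  exact blockLt_asymm hbi hbi'
end

section
/- In the algebraic coloring χ₁ over F_q², there do not exist five distinct vertices a, b, c, d, e with χ₁(ab) = χ₁(cd) = χ₁(de) and χ₁(bc) = χ₁(ad) = χ₁(be). -/
/-- The algebraic coloring of Mubayi: vertices are vectors in `F × F`; the color of the
edge `xy` is `(x₁y₁ - x₂ - y₂, δ(x₁,y₁))` where `δ(x₁,y₁) = 0` iff `x₁ = y₁`. -/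
def chi1 {F : Type*} [Field F] [DecidableEq F] (x y : F × F) : F × Fin 2 :=
  (x.1 * y.1 - x.2 - y.2, if x.1 = y.1 then 0 else 1)

/-- The algebraic coloring forbids five distinct vertices `a,b,c,d,e` with
`χ₁(ab) = χ₁(cd) = χ₁(de)` and `χ₁(bc) = χ₁(ad) = χ₁(be)`. -/
theorem stmt_12 {F : Type*} [Field F] [Fintype F] [DecidableEq F]
    (hodd : Odd (Fintype.card F)) (a b c d e : F × F)
    (hdist : Function.Injective ![a, b, c, d, e])
    (h1 : chi1 a b = chi1 c d) (h2 : chi1 c d = chi1 d e)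
    (h3 : chi1 b c = chi1 a d) (h4 : chi1 a d = chi1 b e) : False := by
  have h2ne : (2 : F) ≠ 0 := by
    intro h20
    have hdvd : ringChar F ∣ 2 := (CharP.cast_eq_zero_iff F (ringChar F) 2).mp (by
      exact_mod_cast h20)
    have hchar : ringChar F = 2 :=
      ((Nat.prime_two.eq_one_or_self_of_dvd _ hdvd).resolve_left
        (CharP.ringChar_ne_one (R := F)))
    have heven := FiniteField.even_card_of_char_two hchar
    have := Nat.odd_iff.mp hodd
    omega
  have e1 : a.1 * b.1 - a.2 - b.2 = c.1 * d.1 - c.2 - d.2 := congrArg Prod.fst h1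
  have e2 : c.1 * d.1 - c.2 - d.2 = d.1 * e.1 - d.2 - e.2 := congrArg Prod.fst h2
  have e3 : b.1 * c.1 - b.2 - c.2 = a.1 * d.1 - a.2 - d.2 := congrArg Prod.fst h3
  have e4 : a.1 * d.1 - a.2 - d.2 = b.1 * e.1 - b.2 - e.2 := congrArg Prod.fst h4
  have hbd : b ≠ d := fun h => by
    have := hdist (a₁ := 1) (a₂ := 3) (by simpa using h); simp at this
  have hce : c ≠ e := fun h => by
    have := hdist (a₁ := 2) (a₂ := 4) (by simpa using h); simp at this
  have key : (b.1 - d.1) * (c.1 - e.1) = 0 := by linear_combination e3 + e4 - e2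
  rcases mul_eq_zero.mp key with h | h
  · -- b₁ = d₁ ⇒ b₂ = d₂ via alternating C4 identity
    have hb1 : b.1 = d.1 := sub_eq_zero.mp h
    have h2bd : 2 * (b.2 - d.2) = 0 := by
      linear_combination (a.1 + c.1) * h - e1 - e3
    have hb2 : b.2 = d.2 := by
      rcases mul_eq_zero.mp h2bd with h' | h'
      · exact absurd h' h2ne
      · exact sub_eq_zero.mp h'
    exact hbd (Prod.ext hb1 hb2)
  · have hc1 : c.1 = e.1 := sub_eq_zero.mp h
    have hc2 : c.2 = e.2 := by linear_combination d.1 * h - e2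
    exact hce (Prod.ext hc1 hc2)
end

section
/- In the algebraic coloring χ₁ over F_q², there do not exist five distinct vertices a, b, c, d, e with χ₁(bc) = χ₁(cd) = χ₁(de), χ₁(eb) = χ₁(ba) = χ₁(ad), and χ₁(ac) = χ₁(ae). -/
/-- The algebraic coloring forbids five distinct vertices `a,b,c,d,e` with
`χ₁(bc) = χ₁(cd) = χ₁(de)`, `χ₁(eb) = χ₁(ba) = χ₁(ad)`, and `χ₁(ac) = χ₁(ae)`. -/
theorem stmt_13 {F : Type*} [Field F] [Fintype F] [DecidableEq F]
    (hodd : Odd (Fintype.card F)) (a b c d e : F × F)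
    (hdist : Function.Injective ![a, b, c, d, e])
    (h1 : chi1 b c = chi1 c d) (h2 : chi1 c d = chi1 d e)
    (h3 : chi1 e b = chi1 b a) (h4 : chi1 b a = chi1 a d)
    (h5 : chi1 a c = chi1 a e) : False := by
  have hbd : b ≠ d := fun h => by
    have := hdist (show ![a, b, c, d, e] 1 = ![a, b, c, d, e] 3 by simpa using h)
    exact absurd this (by decide)
  have hce : c ≠ e := fun h => by
    have := hdist (show ![a, b, c, d, e] 2 = ![a, b, c, d, e] 4 by simpa using h)
    exact absurd this (by decide)
  rw [chi1, chi1, Prod.mk.injEq] at h1 h2 h3 h4 h5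
  obtain ⟨e1, d1⟩ := h1
  obtain ⟨e2, d2⟩ := h2
  obtain ⟨e4, d4⟩ := h4
  obtain ⟨e5, d5⟩ := h5
  -- b₁ ≠ d₁
  have hbd1 : b.1 ≠ d.1 := by
    intro h
    apply hbd
    have : b.2 = d.2 := by linear_combination c.1 * h - e1
    exact Prod.ext h this
  -- (c₁ - a₁)(b₁ - d₁) = 0, hence c₁ = a₁
  have hca : c.1 = a.1 := by
    have key : (c.1 - a.1) * (b.1 - d.1) = 0 := by linear_combination e1 - e4
    rcases mul_eq_zero.mp key with h | h
    · exact sub_eq_zero.mp h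
    · exact absurd (sub_eq_zero.mp h) hbd1
  -- δ-part of h5: a₁ = c₁ ↔ a₁ = e₁
  have hae : a.1 = e.1 := by
    by_contra hne
    rw [if_neg hne, if_pos hca.symm] at d5
    exact absurd d5 (by decide)
  have hce1 : c.1 = e.1 := hca.trans hae
  apply hce
  have : c.2 = e.2 := by linear_combination d.1 * hce1 - e2
  exact Prod.ext hce1 this
end

section
/- In the algebraic coloring χ₁ over F_q², there do not exist five distinct vertices a, b, c, d, e with χ₁(bc) = χ₁(cd) = χ₁(de), χ₁(eb) = χ₁(ba) = χ₁(ad), and χ₁(ec) = χ₁(ae). -/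
/-- The algebraic coloring forbids five distinct vertices `a,b,c,d,e` with
`χ₁(bc) = χ₁(cd) = χ₁(de)`, `χ₁(eb) = χ₁(ba) = χ₁(ad)`, and `χ₁(ec) = χ₁(ae)`. -/
theorem stmt_14 {F : Type*} [Field F] [Fintype F] [DecidableEq F]
    (hodd : Odd (Fintype.card F)) (a b c d e : F × F)
    (hdist : Function.Injective ![a, b, c, d, e])
    (h1 : chi1 b c = chi1 c d) (h2 : chi1 c d = chi1 d e)
    (h3 : chi1 e b = chi1 b a) (h4 : chi1 b a = chi1 a d)
    (h5 : chi1 e c = chi1 a e) : False := by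
  have hac : a ≠ c := by
    intro h
    have : (0 : Fin 5) = 2 := hdist (by simp [h])
    exact absurd this (by decide)
  have hbd : b ≠ d := by
    intro h
    have : (1 : Fin 5) = 3 := hdist (by simp [h])
    exact absurd this (by decide)
  have H1 : b.1 * c.1 - b.2 - c.2 = c.1 * d.1 - c.2 - d.2 := congrArg Prod.fst h1
  have H4 : b.1 * a.1 - b.2 - a.2 = a.1 * d.1 - a.2 - d.2 := congrArg Prod.fst h4
  have H5 : e.1 * c.1 - e.2 - c.2 = a.1 * e.1 - a.2 - e.2 := congrArg Prod.fst h5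
  have key : (c.1 - a.1) * (b.1 - d.1) = 0 := by linear_combination H1 - H4
  rcases mul_eq_zero.mp key with h' | h'
  · have hc1 : c.1 = a.1 := sub_eq_zero.mp h'
    have hc2 : c.2 = a.2 := by linear_combination e.1 * hc1 - H5
    exact hac (Prod.ext hc1.symm hc2.symm)
  · have hb1 : b.1 = d.1 := sub_eq_zero.mp h'
    have hb2 : b.2 = d.2 := by linear_combination c.1 * hb1 - H1
    exact hbd (Prod.ext hb1 hb2)
end

section
/- In the CFLS coloring φ₁, there do not exist five distinct vertices a, b, c, d, e with φ₁(ab) = φ₁(cd), φ₁(bc) = φ₁(ad), φ₁(ae) = φ₁(ac), and φ₁(bd) = φ₁(bc). -/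
lemma fd_eq_none {β : ℕ} {α : Type*} [DecidableEq α] {u v : Fin β → α} :
    firstDiff u v = none ↔ u = v := by
  unfold firstDiff
  split_ifs with h
  · constructor
    · intro hc; exact absurd hc (by simp)
    · rintro rfl
      obtain ⟨k, hk⟩ := h
      simp at hk
  · constructor
    · intro _
      funext k
      by_contra hk
      exact h ⟨k, by simp [hk]⟩
    · intro _; rfl

lemma fd_some_ne {β : ℕ} {α : Type*} [DecidableEq α] {u v : Fin β → α} {j : Fin β}
    (h : firstDiff u v = some j) : u j ≠ v j := by
  unfold firstDiff at h
  split_ifs at h with hn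
  · rw [Option.some_inj] at h
    have hm := Finset.min'_mem _ hn
    rw [h] at hm
    simpa using hm

/-- The CFLS coloring forbids five distinct vertices `a,b,c,d,e` with
`φ₁(ab) = φ₁(cd)`, `φ₁(bc) = φ₁(ad)`, `φ₁(ae) = φ₁(ac)`, and `φ₁(bd) = φ₁(bc)`. -/
theorem stmt_18 {β : ℕ} (a b c d e : Fin β → Fin β → Bool)
    (hdist : Function.Injective ![a, b, c, d, e])
    (h1 : phi1 a b = phi1 c d) (h2 : phi1 b c = phi1 a d)
    (h3 : phi1 a e = phi1 a c) (h4 : phi1 b d = phi1 b c) : False := by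
  have hab : a ≠ b := by
    intro h
    have : (0 : Fin 5) = 1 := hdist (by simpa using h)
    exact absurd this (by decide)
  -- firstDiff a b = some j
  have hne : firstDiff a b ≠ none := fun h => hab (fd_eq_none.mp h)
  obtain ⟨j, hj⟩ : ∃ j, firstDiff a b = some j := by
    cases h : firstDiff a b with
    | none => exact absurd h hne
    | some j => exact ⟨j, rfl⟩
  have h1f : (firstDiff a b).map (fun i => (i, ({a i, b i} : Finset (Fin β → Bool))))
      = (firstDiff c d).map (fun i => (i, ({c i, d i} : Finset (Fin β → Bool)))) :=
    congrArg Prod.fst h1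
  cases hcd : firstDiff c d with
  | none => rw [hj, hcd] at h1f; simp at h1f
  | some j' =>
    rw [hj, hcd] at h1f
    simp only [Option.map_some, Option.some_inj, Prod.mk.injEq] at h1f
    obtain ⟨rfl, hset⟩ := h1f
    have hne1 : a j ≠ b j := fd_some_ne hj
    have hne2 : c j ≠ d j := fd_some_ne hcd
    have h4j : firstDiff (b j) (d j) = firstDiff (b j) (c j) :=
      congrFun (congrArg Prod.snd h4) j
    have hd : d j = a j ∨ d j = b j := by
      have : d j ∈ ({a j, b j} : Finset (Fin β → Bool)) := by
        rw [hset]; simp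
      simpa using this
    rcases hd with hd | hd
    · -- d j = a j, so c j = b j
      have hc : c j = b j := by
        have : c j ∈ ({a j, b j} : Finset (Fin β → Bool)) := by
          rw [hset]; simp
        rcases (by simpa using this : c j = a j ∨ c j = b j) with h | h
        · exact absurd (h.trans hd.symm) hne2
        · exact h
      have : firstDiff (b j) (c j) = none := fd_eq_none.mpr hc.symm
      rw [this] at h4j
      have : b j = d j := fd_eq_none.mp h4j
      exact hne1 (hd ▸ this.symm)
    · -- d j = b j
      have : firstDiff (b j) (d j) = none := fd_eq_none.mpr hd.symm
      rw [this] at h4j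
      have hbc : b j = c j := fd_eq_none.mp h4j.symm
      have : a j ∈ ({c j, d j} : Finset (Fin β → Bool)) := by
        rw [← hset]; simp
      rcases (by simpa using this : a j = c j ∨ a j = d j) with h | h
      · exact hne1 (h.trans hbc.symm)
      · exact hne1 (h.trans hd)
end
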